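/- arXiv:1802.05098 — 8 statements merged into one kernel-verified Lean document; each statement's English description precedes it below -/
import Mathlib

section
/- Let X be a finite type, let p : X → ℝ → ℝ be a parameterized probability distribution on X (p(x;θ) > 0 for all x, ∑_{x∈X} p(x;θ) = 1 for all θ) with θ ↦ p(x;θ) twice differentiable for each x, and let f : X → ℝ → ℝ with θ ↦ f(x;θ) twice differentiable for each x. Define L(θ) = ∑_{x∈X} p(x;θ) f(x;θ) and g(x;θ) = f(x;θ) ∂_θ log p(x;θ) + ∂_θ f(x;θ). Then for every θ, L''(θ) = ∑_{x∈X} p(x;θ) · ( g(x;θ) · ∂_θ log p(x;θ) + ∂_θ g(x;θ) ). -/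
/-!
The identity holds term by term. The first-order score-function trick
`(p f)' = p (f (log p)' + f') = p g` holds pointwise wherever `p ≠ 0`; applying it once more,
to `p g`, gives `(p f)'' = (p g)' = p (g (log p)' + g')`. Summing over `X` commutes with
differentiation.
-/

open Real Finset

theorem deriv_fun_mul_eq_mul_score {p f : ℝ → ℝ} {t : ℝ} (hp : DifferentiableAt ℝ p t)
    (hf : DifferentiableAt ℝ f t) (hp0 : p t ≠ 0) :
    deriv (fun s => p s * f s) t = p t * (f t * deriv (fun s => log (p s)) t + deriv f t) := by
  rw [deriv_fun_mul hp hf, deriv.log hp hp0]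
  field_simp

theorem deriv_deriv_fun_mul_eq_mul_score {p f g : ℝ → ℝ} (hp : ContDiff ℝ 2 p)
    (hf : ContDiff ℝ 2 f) (hp0 : ∀ s, p s ≠ 0)
    (hg : g = fun s => f s * deriv (fun s => log (p s)) s + deriv f s) (t : ℝ) :
    deriv (deriv fun s => p s * f s) t =
      p t * (g t * deriv (fun s => log (p s)) t + deriv g t) := by
  have hpd := hp.differentiable two_ne_zero
  have hgd : Differentiable ℝ g := hg ▸
    ((hf.differentiable two_ne_zero).mul (hp.log hp0).differentiable_deriv_two).add
      hf.differentiable_deriv_two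
  have hpf : deriv (fun s => p s * f s) = fun s => p s * g s := by
    funext s
    rw [deriv_fun_mul_eq_mul_score (hpd s) (hf.differentiable two_ne_zero s) (hp0 s), hg]
  rw [hpf, deriv_fun_mul_eq_mul_score (hpd t) (hgd t) (hp0 t)]

theorem deriv_deriv_fun_sum {𝕜 E ι : Type*} [NontriviallyNormedField 𝕜] [NormedAddCommGroup E]
    [NormedSpace 𝕜 E] {u : Finset ι} {A : ι → 𝕜 → E} (h : ∀ i ∈ u, ContDiff 𝕜 2 (A i))
    (x : 𝕜) :
    deriv (deriv fun y => ∑ i ∈ u, A i y) x = ∑ i ∈ u, deriv (deriv (A i)) x := by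
  have hsum : deriv (fun y => ∑ i ∈ u, A i y) = fun y => ∑ i ∈ u, deriv (A i) y := by
    funext y
    exact deriv_fun_sum fun i hi => (h i hi).differentiable two_ne_zero y
  rw [hsum, deriv_fun_sum fun i hi => (h i hi).differentiable_deriv_two x]

theorem second_order_score_function_estimator_unbiased_general
    {X : Type*} [Fintype X] (p f g : X → ℝ → ℝ)
    (hp_pos : ∀ x θ, 0 < p x θ)
    (hp_smooth : ∀ x, ContDiff ℝ 2 (p x))
    (hf_smooth : ∀ x, ContDiff ℝ 2 (f x))
    (hg : ∀ x θ, g x θ =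
      f x θ * deriv (fun θ => Real.log (p x θ)) θ + deriv (f x) θ) :
    ∀ θ : ℝ,
      deriv (deriv (fun θ => ∑ x, p x θ * f x θ)) θ =
        ∑ x, p x θ *
          (g x θ * deriv (fun θ => Real.log (p x θ)) θ + deriv (g x) θ) := by
  intro θ
  rw [deriv_deriv_fun_sum fun x _ => (hp_smooth x).mul (hf_smooth x)]
  exact sum_congr rfl fun x _ => deriv_deriv_fun_mul_eq_mul_score (hp_smooth x) (hf_smooth x)
    (fun s => (hp_pos x s).ne') (funext (hg x)) θ

/-- The exact second-order score function estimator is unbiased: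
`L''(θ) = ∑_x p(x;θ) (g(x;θ) ∂_θ log p(x;θ) + ∂_θ g(x;θ))` where
`g(x;θ) = f(x;θ) ∂_θ log p(x;θ) + ∂_θ f(x;θ)`. -/
theorem second_order_score_function_estimator_unbiased
    {X : Type*} [Fintype X] (p f g : X → ℝ → ℝ)
    (hp_pos : ∀ x θ, 0 < p x θ)
    (hp_sum : ∀ θ, ∑ x, p x θ = 1)
    (hp_smooth : ∀ x, ContDiff ℝ 2 (p x))
    (hf_smooth : ∀ x, ContDiff ℝ 2 (f x))
    (hg : ∀ x θ, g x θ =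
      f x θ * deriv (fun θ => Real.log (p x θ)) θ + deriv (f x) θ) :
    ∀ θ : ℝ,
      deriv (deriv (fun θ => ∑ x, p x θ * f x θ)) θ =
        ∑ x, p x θ *
          (g x θ * deriv (fun θ => Real.log (p x θ)) θ + deriv (g x) θ) :=
  second_order_score_function_estimator_unbiased_general p f g hp_pos hp_smooth hf_smooth hg
end

section
/- Let X be a finite type, let p : X → ℝ → ℝ be a parameterized probability distribution on X (p(x;θ) > 0 for all x, ∑_{x∈X} p(x;θ) = 1 for all θ) with θ ↦ p(x;θ) infinitely differentiable for each x, and let f : X → ℝ → ℝ with θ ↦ f(x;θ) infinitely differentiable for each x. Define the sequence of estimators c⁰(x;θ) = f(x;θ) and c^{n+1}(x;θ) = ∂_θ c^n(x;θ) + c^n(x;θ) ∂_θ log p(x;θ), and let L(θ) = ∑_{x∈X} p(x;θ) f(x;θ). Then for every n ≥ 0 and every θ, ∑_{x∈X} p(x;θ) c^n(x;θ) = L^{(n)}(θ), i.e., c^n is an unbiased estimator of the n-th order derivative of the objective. -/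
/-- Repeated application of the score function trick gives unbiased estimators
of all orders: with `c⁰ = f` and `c^{n+1} = ∂_θ c^n + c^n ∂_θ log p`, we have
`∑_x p(x;θ) c^n(x;θ) = L^{(n)}(θ)`. -/
theorem score_function_recursion_unbiased_all_orders
    {X : Type*} [Fintype X] (p f : X → ℝ → ℝ)
    (hp_pos : ∀ x θ, 0 < p x θ)
    (hp_sum : ∀ θ, ∑ x, p x θ = 1)
    (hp_smooth : ∀ x, ContDiff ℝ (⊤ : ℕ∞) (p x))
    (hf_smooth : ∀ x, ContDiff ℝ (⊤ : ℕ∞) (f x))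
    (c : ℕ → X → ℝ → ℝ)
    (hc0 : ∀ x θ, c 0 x θ = f x θ)
    (hcrec : ∀ n x θ, c (n + 1) x θ =
      deriv (c n x) θ + c n x θ * deriv (fun θ => Real.log (p x θ)) θ) :
    ∀ (n : ℕ) (θ : ℝ),
      ∑ x, p x θ * c n x θ = deriv^[n] (fun θ => ∑ x, p x θ * f x θ) θ := by
  -- deriv of log (p x) is p' / p
  have hlog : ∀ x θ, deriv (fun θ => Real.log (p x θ)) θ = deriv (p x) θ / p x θ := by
    intro x θ
    have hd : HasDerivAt (p x) (deriv (p x) θ) θ :=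
      ((hp_smooth x).differentiable (by simp) θ).hasDerivAt
    exact (hd.log (hp_pos x θ).ne').deriv
  -- c n is smooth for all n
  have hp' : ∀ x, ContDiff ℝ ((⊤:ℕ∞) : WithTop ℕ∞) (p x) := fun x => (hp_smooth x).of_le (by simp)
  have hsmooth : ∀ n x, ContDiff ℝ ((⊤:ℕ∞) : WithTop ℕ∞) (c n x) := by
    intro n
    induction n with
    | zero => intro x; have : c 0 x = f x := funext (hc0 x); rw [this]; exact (hf_smooth x).of_le (by simp)
    | succ n ih =>
      intro x
      have hcn := ih x
      have heq : c (n + 1) x =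
          fun θ => deriv (c n x) θ + c n x θ * (deriv (p x) θ / p x θ) := by
        funext θ; rw [hcrec n x θ, hlog x θ]
      rw [heq]
      have hderiv : ContDiff ℝ ((⊤:ℕ∞) : WithTop ℕ∞) (deriv (c n x)) := (contDiff_infty_iff_deriv.mp hcn).2
      have hpderiv : ContDiff ℝ ((⊤:ℕ∞) : WithTop ℕ∞) (deriv (p x)) := (contDiff_infty_iff_deriv.mp (hp' x)).2
      exact hderiv.add (hcn.mul (hpderiv.div (hp' x) (fun θ => (hp_pos x θ).ne')))
  intro n
  induction n with
  | zero =>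
    intro θ
    simp only [Function.iterate_zero, id]
    exact Finset.sum_congr rfl fun x _ => by rw [hc0 x θ]
  | succ n ih =>
    intro θ
    rw [Function.iterate_succ_apply']
    have hfun : deriv^[n] (fun θ => ∑ x, p x θ * f x θ) = fun θ => ∑ x, p x θ * c n x θ :=
      funext fun θ => (ih θ).symm
    rw [hfun]
    have hdiff : ∀ x ∈ Finset.univ (α := X), DifferentiableAt ℝ (fun θ => p x θ * c n x θ) θ :=
      fun x _ => ((hp_smooth x).differentiable (by simp) θ).mul
        ((hsmooth n x).differentiable (by simp) θ)
    rw [deriv_fun_sum hdiff]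
    refine Finset.sum_congr rfl fun x _ => ?_
    have hdp : DifferentiableAt ℝ (p x) θ := (hp_smooth x).differentiable (by simp) θ
    have hdc : DifferentiableAt ℝ (c n x) θ := (hsmooth n x).differentiable (by simp) θ
    rw [deriv_fun_mul hdp hdc, hcrec n x θ, hlog x θ]
    have hne : p x θ ≠ 0 := (hp_pos x θ).ne'
    field_simp
    ring
end

section
/- (DiCE correctness, single stochastic node.) Let X be a finite type, let p : X → ℝ → ℝ be a parameterized probability distribution on X (p(x;θ) > 0 for all x, ∑_{x∈X} p(x;θ) = 1 for all θ) with θ ↦ p(x;θ) infinitely differentiable for each x, let f : X → ℝ → ℝ with θ ↦ f(x;θ) infinitely differentiable for each x, and fix θ₀ ∈ ℝ. Define L(θ) = ∑_{x∈X} p(x;θ) f(x;θ) and the per-sample DiCE objective ℓ(x;θ) = (p(x;θ)/p(x;θ₀)) · f(x;θ). Then for every n ≥ 0, ∑_{x∈X} p(x;θ₀) · ∂ⁿ_θ ℓ(x;θ)|_{θ=θ₀} = L^{(n)}(θ₀); in particular (n = 0) the DiCE objective evaluates in expectation to L(θ₀). -/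
lemma iteratedDeriv_const_mul' {n : ℕ} {g : ℝ → ℝ} (h : ContDiff ℝ n g) (c : ℝ) (x : ℝ) :
    iteratedDeriv n (fun z => c * g z) x = c * iteratedDeriv n g x := by
  simp only [iteratedDeriv_eq_iteratedFDeriv]
  have : (fun z => c * g z) = fun z => c • g z := by simp
  rw [this, iteratedFDeriv_const_smul_apply' h.contDiffAt]
  simp

lemma iteratedDeriv_sum' {ι : Type*} {n : ℕ} (g : ι → ℝ → ℝ) (u : Finset ι)
    (h : ∀ j ∈ u, ContDiff ℝ n (g j)) (x : ℝ) :
    iteratedDeriv n (fun z => ∑ j ∈ u, g j z) x = ∑ j ∈ u, iteratedDeriv n (g j) x := by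
  simp only [iteratedDeriv_eq_iteratedFDeriv]
  rw [show (fun z => ∑ j ∈ u, g j z) = (∑ j ∈ u, g j ·) from rfl, iteratedFDeriv_sum h]
  simp

/-- DiCE correctness with a single stochastic node: the `n`-th derivative of
the per-sample DiCE objective `ℓ(x;θ) = (p(x;θ)/p(x;θ₀)) f(x;θ)`, evaluated at
`θ₀` and averaged over `x ∼ p(·;θ₀)`, equals `L^{(n)}(θ₀)` for every `n ≥ 0`. -/
theorem dice_correct_single_node
    {X : Type*} [Fintype X] (p f : X → ℝ → ℝ)
    (hp_pos : ∀ x θ, 0 < p x θ)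
    (hp_sum : ∀ θ, ∑ x, p x θ = 1)
    (hp_smooth : ∀ x, ContDiff ℝ (⊤ : ℕ∞) (p x))
    (hf_smooth : ∀ x, ContDiff ℝ (⊤ : ℕ∞) (f x))
    (θ₀ : ℝ) :
    ∀ n : ℕ,
      ∑ x, p x θ₀ * deriv^[n] (fun θ => p x θ / p x θ₀ * f x θ) θ₀ =
        deriv^[n] (fun θ => ∑ x, p x θ * f x θ) θ₀ := by
  intro n
  simp only [← iteratedDeriv_eq_iterate]
  have hpf : ∀ x : X, ContDiff ℝ n (fun θ => p x θ * f x θ) := fun x =>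
    ((hp_smooth x).of_le (by exact_mod_cast le_top)).mul ((hf_smooth x).of_le (by exact_mod_cast le_top))
  rw [iteratedDeriv_sum' _ _ (fun x _ => hpf x)]
  refine Finset.sum_congr rfl fun x _ => ?_
  have hne : p x θ₀ ≠ 0 := (hp_pos x θ₀).ne'
  have : (fun θ => p x θ / p x θ₀ * f x θ) = fun θ => (p x θ₀)⁻¹ * (p x θ * f x θ) := by
    funext θ; field_simp
  rw [this, iteratedDeriv_const_mul' (hpf x)]
  field_simp
end

section
/- (DiCE correctness with causality, two stochastic nodes.) Let X and Y be finite types. Let p : X → ℝ → ℝ and q : X → Y → ℝ → ℝ satisfy p(x;θ) > 0, ∑_x p(x;θ) = 1, q(x,y;θ) > 0, and ∑_y q(x,y;θ) = 1 for all x, θ, with all maps θ ↦ p(x;θ), θ ↦ q(x,y;θ) infinitely differentiable. Let c₁ : X → ℝ → ℝ and c₂ : X → Y → ℝ → ℝ be cost functions, infinitely differentiable in θ. Fix θ₀ and define L(θ) = ∑_{x,y} p(x;θ) q(x,y;θ) ( c₁(x;θ) + c₂(x,y;θ) ) and the DiCE objective ℓ(x,y;θ) = (p(x;θ)/p(x;θ₀))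 c₁(x;θ) + (p(x;θ) q(x,y;θ) / (p(x;θ₀) q(x,y;θ₀))) c₂(x,y;θ), in which each cost is multiplied only by the MagicBox of its upstream stochastic nodes. Then for every n ≥ 0, ∑_{x,y} p(x;θ₀) q(x,y;θ₀) · ∂ⁿ_θ ℓ(x,y;θ)|_{θ=θ₀} = L^{(n)}(θ₀). -/
lemma my_iteratedDeriv_sum {ι : Type*} (s : Finset ι) (f : ι → ℝ → ℝ) (n : ℕ)
    (h : ∀ j ∈ s, ContDiff ℝ (⊤ : ℕ∞) (f j)) (x : ℝ) :
    iteratedDeriv n (fun θ => ∑ j ∈ s, f j θ) x = ∑ j ∈ s, iteratedDeriv n (f j) x := by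
  simp only [iteratedDeriv_eq_iteratedFDeriv]
  rw [show (fun θ => ∑ j ∈ s, f j θ) = (∑ j ∈ s, f j ·) from rfl,
    iteratedFDeriv_sum (fun j hj => (h j hj).of_le (by exact_mod_cast le_top))]
  simp

lemma my_iteratedDeriv_const_mul (n : ℕ) (c : ℝ) (f : ℝ → ℝ) (h : ContDiff ℝ (⊤ : ℕ∞) f) (x : ℝ) :
    iteratedDeriv n (fun θ => c * f θ) x = c * iteratedDeriv n f x := by
  simp only [iteratedDeriv_eq_iteratedFDeriv]
  have := iteratedFDeriv_const_smul_apply (𝕜 := ℝ) (f := f) (i := n) (x := x) (a := c)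
    (h.of_le (by exact_mod_cast le_top)).contDiffAt
  rw [show (fun θ => c * f θ) = (c • f) from rfl, this]
  simp

/-- DiCE correctness with causality in a two-node stochastic computation graph:
each cost is multiplied only by the MagicBox of its upstream stochastic nodes,
and the resulting objective gives unbiased derivative estimators of all orders. -/
theorem dice_correct_two_nodes_causality
    {X Y : Type*} [Fintype X] [Fintype Y]
    (p : X → ℝ → ℝ) (q : X → Y → ℝ → ℝ)
    (c₁ : X → ℝ → ℝ) (c₂ : X → Y → ℝ → ℝ)
    (hp_pos : ∀ x θ, 0 < p x θ)
    (hp_sum : ∀ θ, ∑ x, p x θ = 1)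
    (hq_pos : ∀ x y θ, 0 < q x y θ)
    (hq_sum : ∀ x θ, ∑ y, q x y θ = 1)
    (hp_smooth : ∀ x, ContDiff ℝ (⊤ : ℕ∞) (p x))
    (hq_smooth : ∀ x y, ContDiff ℝ (⊤ : ℕ∞) (q x y))
    (hc₁_smooth : ∀ x, ContDiff ℝ (⊤ : ℕ∞) (c₁ x))
    (hc₂_smooth : ∀ x y, ContDiff ℝ (⊤ : ℕ∞) (c₂ x y))
    (θ₀ : ℝ) :
    ∀ n : ℕ,
      ∑ x, ∑ y, p x θ₀ * q x y θ₀ *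
          deriv^[n] (fun θ =>
            p x θ / p x θ₀ * c₁ x θ +
              p x θ * q x y θ / (p x θ₀ * q x y θ₀) * c₂ x y θ) θ₀ =
        deriv^[n]
          (fun θ => ∑ x, ∑ y, p x θ * q x y θ * (c₁ x θ + c₂ x y θ)) θ₀ := by
  intro n
  simp only [← iteratedDeriv_eq_iterate]
  -- smoothness of the per-sample modified objective
  have hg_smooth : ∀ (x : X) (y : Y), ContDiff ℝ (⊤ : ℕ∞)
      (fun θ => p x θ * q x y θ₀ * c₁ x θ + p x θ * q x y θ * c₂ x y θ) := by
    intro x y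
    exact (((hp_smooth x).mul contDiff_const).mul (hc₁_smooth x)).add
      (((hp_smooth x).mul (hq_smooth x y)).mul (hc₂_smooth x y))
  have hf_smooth : ∀ (x : X) (y : Y), ContDiff ℝ (⊤ : ℕ∞)
      (fun θ => p x θ / p x θ₀ * c₁ x θ +
        p x θ * q x y θ / (p x θ₀ * q x y θ₀) * c₂ x y θ) := by
    intro x y
    exact (((hp_smooth x).div_const _).mul (hc₁_smooth x)).add
      ((((hp_smooth x).mul (hq_smooth x y)).div_const _).mul (hc₂_smooth x y))
  have key : ∀ (x : X) (y : Y),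
      p x θ₀ * q x y θ₀ *
        iteratedDeriv n (fun θ =>
          p x θ / p x θ₀ * c₁ x θ +
            p x θ * q x y θ / (p x θ₀ * q x y θ₀) * c₂ x y θ) θ₀ =
      iteratedDeriv n
        (fun θ => p x θ * q x y θ₀ * c₁ x θ + p x θ * q x y θ * c₂ x y θ) θ₀ := by
    intro x y
    rw [← my_iteratedDeriv_const_mul n (p x θ₀ * q x y θ₀) _ (hf_smooth x y)]
    congr 1
    funext θ
    have h1 : p x θ₀ ≠ 0 := (hp_pos x θ₀).ne'
    have h2 : q x y θ₀ ≠ 0 := (hq_pos x y θ₀).ne'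
    field_simp
  simp only [key]
  rw [show (fun θ => ∑ x, ∑ y, p x θ * q x y θ * (c₁ x θ + c₂ x y θ)) =
      (fun θ => ∑ x, ∑ y,
        (p x θ * q x y θ₀ * c₁ x θ + p x θ * q x y θ * c₂ x y θ)) from ?_]
  · rw [my_iteratedDeriv_sum _ _ n (fun x _ => by
      exact ContDiff.sum (fun y _ => hg_smooth x y))]
    refine Finset.sum_congr rfl fun x _ => ?_
    rw [my_iteratedDeriv_sum _ _ n (fun y _ => hg_smooth x y)]
  · funext θ
    refine Finset.sum_congr rfl fun x _ => ?_
    simp only [mul_add, Finset.sum_add_distrib]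
    congr 1
    have e : ∀ θ' : ℝ, ∑ y, p x θ * q x y θ' * c₁ x θ = p x θ * c₁ x θ := by
      intro θ'
      calc ∑ y, p x θ * q x y θ' * c₁ x θ = (p x θ * c₁ x θ) * ∑ y, q x y θ' := by
            rw [Finset.mul_sum]; exact Finset.sum_congr rfl fun y _ => by ring
        _ = p x θ * c₁ x θ := by rw [hq_sum]; ring
    rw [e θ, e θ₀]
end

section
/- (Baseline does not bias DiCE estimators of any order.) Let X be a finite type, let p : X → ℝ → ℝ be a parameterized probability distribution on X (p(x;θ) > 0 for all x, ∑_{x∈X} p(x;θ) = 1 for all θ) with θ ↦ p(x;θ) infinitely differentiable for each x, fix θ₀ ∈ ℝ and a constant b ∈ ℝ. Define the baseline term β(x;θ) = (1 − p(x;θ)/p(x;θ₀)) · b. Then ∑_{x∈X} p(x;θ₀) β(x;θ) = 0 for every θ, and consequently for every n ≥ 0, ∑_{x∈X} p(x;θ₀) · ∂ⁿ_θ β(x;θ)|_{θ=θ₀} = 0; moreover β(x;θ₀) = 0 for every x, so adding the baseline leaves the evaluation of the DiCE objective unchanged. -/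
lemma iteratedDeriv_fintype_sum {X : Type*} [Fintype X] (p : X → ℝ → ℝ)
    (hp : ∀ x, ContDiff ℝ (⊤ : ℕ∞) (p x)) (n : ℕ) (θ : ℝ) :
    iteratedDeriv n (fun t => ∑ x, p x t) θ = ∑ x, iteratedDeriv n (p x) θ := by
  have h := iteratedFDeriv_sum (𝕜 := ℝ) (f := p) (u := Finset.univ) (i := n)
    (fun j _ => (hp j).of_le (by exact_mod_cast le_top))
  simp only [iteratedDeriv]
  rw [show (fun t => ∑ x, p x t) = (∑ j ∈ Finset.univ, p j ·) from rfl, h]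
  simp

/-- The DiCE baseline term `β(x;θ) = (1 − p(x;θ)/p(x;θ₀)) b` has zero
expectation for every `θ`, its `n`-th derivative at `θ₀` has zero expectation
for every `n`, and it evaluates to `0` at `θ₀` for every `x`. -/
theorem dice_baseline_unbiased
    {X : Type*} [Fintype X] (p : X → ℝ → ℝ)
    (hp_pos : ∀ x θ, 0 < p x θ)
    (hp_sum : ∀ θ, ∑ x, p x θ = 1)
    (hp_smooth : ∀ x, ContDiff ℝ (⊤ : ℕ∞) (p x))
    (θ₀ : ℝ) (b : ℝ)
    (β : X → ℝ → ℝ)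
    (hβ : ∀ x θ, β x θ = (1 - p x θ / p x θ₀) * b) :
    (∀ θ : ℝ, ∑ x, p x θ₀ * β x θ = 0) ∧
      (∀ n : ℕ, ∑ x, p x θ₀ * deriv^[n] (β x) θ₀ = 0) ∧
      (∀ x, β x θ₀ = 0) := by
  have hne : ∀ x, p x θ₀ ≠ 0 := fun x => (hp_pos x θ₀).ne'
  have h1 : ∀ θ : ℝ, ∑ x, p x θ₀ * β x θ = 0 := by
    intro θ
    have : ∀ x, p x θ₀ * β x θ = (p x θ₀ - p x θ) * b := by
      intro x
      have hx := hne x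
      rw [hβ]
      field_simp
    calc ∑ x, p x θ₀ * β x θ = ∑ x, (p x θ₀ - p x θ) * b :=
          Finset.sum_congr rfl fun x _ => this x
      _ = (∑ x, (p x θ₀ - p x θ)) * b := (Finset.sum_mul ..).symm
      _ = 0 := by rw [Finset.sum_sub_distrib, hp_sum, hp_sum, sub_self, zero_mul]
  refine ⟨h1, ?_, ?_⟩
  · intro n
    rcases Nat.eq_zero_or_pos n with rfl | hn
    · simpa using h1 θ₀
    · have hβ' : ∀ x, β x = fun θ => b + (-(b / p x θ₀)) * p x θ := by
        intro x; funext θ; rw [hβ]; field_simp; ring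
      have key : ∀ x, deriv^[n] (β x) θ₀ = -(b / p x θ₀) * iteratedDeriv n (p x) θ₀ := by
        intro x
        rw [← iteratedDeriv_eq_iterate, hβ']
        rw [← iteratedDerivWithin_univ,
          iteratedDerivWithin_const_add hn,
          iteratedDerivWithin_const_mul (Set.mem_univ θ₀) uniqueDiffOn_univ _
            ((hp_smooth x).of_le (by exact_mod_cast le_top)).contDiffWithinAt,
          iteratedDerivWithin_univ]
      have hsum : ∑ x, iteratedDeriv n (p x) θ₀ = 0 := by
        rw [← iteratedDeriv_fintype_sum p hp_smooth n θ₀]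
        have : (fun t => ∑ x, p x t) = fun _ : ℝ => (1 : ℝ) := funext hp_sum
        rw [this]
        have h0 : iteratedFDeriv ℝ n (fun _ : ℝ => (1 : ℝ)) θ₀ = 0 := by
          rw [iteratedFDeriv_const_of_ne hn.ne']; rfl
        simp [iteratedDeriv, h0]
      calc ∑ x, p x θ₀ * deriv^[n] (β x) θ₀
          = ∑ x, -b * iteratedDeriv n (p x) θ₀ := by
            refine Finset.sum_congr rfl fun x _ => ?_
            have hx := hne x
            rw [key x]
            field_simp
        _ = 0 := by rw [← Finset.mul_sum, hsum, mul_zero]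
  · intro x; rw [hβ, div_self (hne x)]; ring
end

section
/- (Baseline depending on upstream nodes does not bias DiCE estimators of any order.) Let X and Y be finite types. Let p : X → ℝ → ℝ and q : X → Y → ℝ → ℝ satisfy p(x;θ) > 0, ∑_x p(x;θ) = 1, q(x,y;θ) > 0, ∑_y q(x,y;θ) = 1 for all x, θ, with θ ↦ q(x,y;θ) infinitely differentiable. Fix θ₀ and let b : X → ℝ be any function of the upstream node only. Define β(x,y;θ) = (1 − q(x,y;θ)/q(x,y;θ₀)) · b(x). Then ∑_{x,y} p(x;θ₀) q(x,y;θ₀) β(x,y;θ) = 0 for every θ, and consequently for every n ≥ 0, ∑_{x,y} p(x;θ₀) q(x,y;θ₀) · ∂ⁿ_θ β(x,y;θ)|_{θ=θ₀} = 0. -/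
/-- A baseline depending only on upstream nodes does not bias DiCE estimators
of any order: `β(x,y;θ) = (1 − q(x,y;θ)/q(x,y;θ₀)) b(x)` has zero expectation
for every `θ` and all its derivatives at `θ₀` have zero expectation. -/
theorem dice_baseline_upstream_unbiased
    {X Y : Type*} [Fintype X] [Fintype Y]
    (p : X → ℝ → ℝ) (q : X → Y → ℝ → ℝ)
    (hp_pos : ∀ x θ, 0 < p x θ)
    (hp_sum : ∀ θ, ∑ x, p x θ = 1)
    (hq_pos : ∀ x y θ, 0 < q x y θ)
    (hq_sum : ∀ x θ, ∑ y, q x y θ = 1)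
    (hq_smooth : ∀ x y, ContDiff ℝ (⊤ : ℕ∞) (q x y))
    (θ₀ : ℝ) (b : X → ℝ)
    (β : X → Y → ℝ → ℝ)
    (hβ : ∀ x y θ, β x y θ = (1 - q x y θ / q x y θ₀) * b x) :
    (∀ θ : ℝ, ∑ x, ∑ y, p x θ₀ * q x y θ₀ * β x y θ = 0) ∧
      (∀ n : ℕ, ∑ x, ∑ y, p x θ₀ * q x y θ₀ * deriv^[n] (β x y) θ₀ = 0) := by
  -- β is smooth
  have hβ_smooth : ∀ x y, ContDiff ℝ (⊤ : ℕ∞) (β x y) := by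
    intro x y
    have hfun : β x y = fun θ => (1 - q x y θ / q x y θ₀) * b x := funext (hβ x y)
    rw [hfun]
    exact ((contDiff_const.sub ((hq_smooth x y).div_const _)).mul contDiff_const)
  -- key: inner expectation is zero for all θ
  have h1 : ∀ θ : ℝ, ∑ x, ∑ y, p x θ₀ * q x y θ₀ * β x y θ = 0 := by
    intro θ
    have : ∀ x : X, ∑ y, p x θ₀ * q x y θ₀ * β x y θ = 0 := by
      intro x
      have hne : ∀ y : Y, q x y θ₀ ≠ 0 := fun y => (hq_pos x y θ₀).ne'
      have : ∀ y : Y, p x θ₀ * q x y θ₀ * β x y θ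
          = p x θ₀ * b x * q x y θ₀ - p x θ₀ * b x * q x y θ := by
        intro y
        rw [hβ]
        field_simp [hne y]
      rw [Finset.sum_congr rfl (fun y _ => this y), Finset.sum_sub_distrib,
        ← Finset.mul_sum, ← Finset.mul_sum, hq_sum, hq_sum, sub_self]
    simpa [this] using Finset.sum_congr rfl (fun x _ => this x)
  refine ⟨h1, ?_⟩
  -- derivatives of all orders
  have key : ∀ n : ℕ, ∀ θ : ℝ, ∑ x, ∑ y, p x θ₀ * q x y θ₀ * deriv^[n] (β x y) θ = 0 := by
    intro n
    induction n with
    | zero => simpa using h1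
    | succ n ih =>
      intro θ
      have hdiff : ∀ x y, Differentiable ℝ (deriv^[n] (β x y)) := by
        intro x y
        have h := ContDiff.differentiable_iteratedDeriv (n:ℕ) (hβ_smooth x y)
          (by exact_mod_cast ENat.coe_lt_top n)
        rwa [iteratedDeriv_eq_iterate] at h
      have hz : (fun θ => ∑ x, ∑ y, p x θ₀ * q x y θ₀ * deriv^[n] (β x y) θ) = fun _ => (0:ℝ) :=
        funext ih
      have hd : deriv (fun θ => ∑ x, ∑ y, p x θ₀ * q x y θ₀ * deriv^[n] (β x y) θ) θ
          = ∑ x, ∑ y, p x θ₀ * q x y θ₀ * deriv^[n+1] (β x y) θ := by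
        simp only [Function.iterate_succ_apply']
        rw [deriv_fun_sum]
        · refine Finset.sum_congr rfl fun x _ => ?_
          rw [deriv_fun_sum]
          · exact Finset.sum_congr rfl fun y _ => deriv_const_mul _ ((hdiff x y) θ)
          · exact fun y _ => ((hdiff x y) θ).const_mul _
        · intro x _
          exact DifferentiableAt.fun_sum fun y _ => ((hdiff x y) θ).const_mul _
      rw [← hd, hz]
      simp
  exact fun n => key n θ₀
end

section
/- (Toy example: the surrogate-loss second-order estimator is wrong.) Let θ ∈ (0,1), let p(1;θ) = θ and p(0;θ) = 1−θ, and let f(x,θ) = x(1−θ) + (1−x)(1+θ) for x ∈ {0,1}. Define g(x;θ) = f(x,θ) ∂_θ log p(x;θ) + ∂_θ f(x,θ). Then the expectation of the surrogate-loss second-order estimator equals −2 for every θ ∈ (0,1): ∑_{x∈{0,1}} p(x;θ) · ( g(x;θ) ∂_θ log p(x;θ) + f(x,θ) ∂²_θ log p(x;θ) + ∂²_θ f(x,θ) ) = −2, whereas the true second derivative of the objective is −4. -/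
/-!
Both probabilities `p(1;θ) = θ`, `p(0;θ) = 1 - θ` and both costs `f(x,·)` are affine in `θ`.
For `p = a + b θ` and `f = c + d θ` the weighted estimator collapses to `p ∂f ∂log p = b d`:
with `∂log p = b / p` and `∂²log p = -(b / p)²`, the terms `f (∂log p)²` and `f ∂²log p` cancel.
Summing `b d` over `x = 0, 1` gives `(-1)(1) + (1)(-1) = -2`.
-/

open Real

theorem hasDerivAt_log_affine (a b : ℝ) {x : ℝ} (hx : a + b * x ≠ 0) :
    HasDerivAt (fun s => log (a + b * s)) (b / (a + b * x)) x := by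
  simpa using ((hasDerivAt_id x).const_mul b |>.const_add a).log hx

theorem deriv_deriv_log_affine (a b : ℝ) {x : ℝ} (hx : a + b * x ≠ 0) :
    deriv (deriv fun s => log (a + b * s)) x = -(b / (a + b * x)) ^ 2 := by
  have haffine : HasDerivAt (fun s => a + b * s) b x := by
    simpa using (hasDerivAt_id x).const_mul b |>.const_add a
  have hnear : ∀ᶠ s in nhds x, a + b * s ≠ 0 :=
    haffine.continuousAt.eventually_ne hx
  have hderiv : deriv (fun s => log (a + b * s)) =ᶠ[nhds x] fun s => b * (a + b * s)⁻¹ := by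
    filter_upwards [hnear] with s hs
    rw [(hasDerivAt_log_affine a b hs).deriv, div_eq_mul_inv]
  have hderiv' : HasDerivAt (fun s => b * (a + b * s)⁻¹) (b * (-b / (a + b * x) ^ 2)) x :=
    (haffine.inv hx).const_mul b
  rw [hderiv.deriv_eq, hderiv'.deriv, div_pow]
  ring

theorem surrogate_second_order_term_of_affine {P F : ℝ → ℝ} {a b c d θ : ℝ}
    (hP : ∀ s, P s = a + b * s) (hF : ∀ t, F t = c + d * t) (hθ : P θ ≠ 0) :
    P θ * ((F θ * deriv (fun s => log (P s)) θ + deriv F θ) * deriv (fun s => log (P s)) θ +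
        F θ * deriv (deriv fun s => log (P s)) θ + deriv (deriv F) θ) = b * d := by
  obtain rfl : P = fun s => a + b * s := funext hP
  obtain rfl : F = fun t => c + d * t := funext hF
  have hderivF : deriv (fun t => c + d * t) = fun _ => d := funext fun t => by simp
  rw [(hasDerivAt_log_affine a b hθ).deriv, deriv_deriv_log_affine a b hθ, hderivF, deriv_const]
  field_simp
  ring

/-- Toy example: the surrogate-loss second-order estimator is wrong. Its
expectation equals `−2` for every `θ ∈ (0,1)`, whereas the true second
derivative of the objective is `−4`. -/
theorem toy_example_sl_second_order_wrong
    (p f g : ℝ → ℝ → ℝ)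
    (hp1 : ∀ t : ℝ, p 1 t = t)
    (hp0 : ∀ t : ℝ, p 0 t = 1 - t)
    (hf : ∀ x t : ℝ, f x t = x * (1 - t) + (1 - x) * (1 + t))
    (hg : ∀ x t : ℝ, g x t =
      f x t * deriv (fun s => Real.log (p x s)) t + deriv (f x) t) :
    ∀ θ ∈ Set.Ioo (0 : ℝ) 1,
      ∑ x ∈ ({0, 1} : Finset ℝ),
          p x θ * (g x θ * deriv (fun t => Real.log (p x t)) θ +
            f x θ * deriv (deriv (fun t => Real.log (p x t))) θ +
            deriv (deriv (f x)) θ) = -2 := by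
  rintro θ ⟨hθ_pos, hθ_lt_one⟩
  have term0 := surrogate_second_order_term_of_affine (P := p 0) (F := f 0)
    (a := 1) (b := -1) (c := 1) (d := 1) (θ := θ)
    (fun s => by rw [hp0]; ring) (fun t => by rw [hf]; ring) (by rw [hp0]; linarith)
  have term1 := surrogate_second_order_term_of_affine (P := p 1) (F := f 1)
    (a := 0) (b := 1) (c := 1) (d := -1) (θ := θ)
    (fun s => by rw [hp1]; ring) (fun t => by rw [hf]; ring) (by rw [hp1]; linarith)
  rw [Finset.sum_pair zero_ne_one, hg, hg, term0, term1]
  norm_num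
end

section
/- (DiCE estimators of all orders in the two-node graph agree with the recursion.) Let X and Y be finite types, let p : X → ℝ → ℝ and q : X → Y → ℝ → ℝ be as in a two-node stochastic computation graph (p(x;θ) > 0, ∑_x p = 1, q(x,y;θ) > 0, ∑_y q = 1, all infinitely differentiable in θ), and let c : X → Y → ℝ → ℝ be infinitely differentiable in θ. Define the score sum s(x,y;θ) = ∂_θ log p(x;θ) + ∂_θ log q(x,y;θ), the estimator recursion c⁰ = c, c^{n+1}(x,y;θ) = ∂_θ c^n(x,y;θ) + c^n(x,y;θ) s(x,y;θ), and L(θ) = ∑_{x,y} p(x;θ) q(x,y;θ) c(x,y;θ). Then for every n ≥ 0 and every θ, ∑_{x,y} p(x;θ) q(x,y;θ) c^n(x,y;θ) = L^{(n)}(θ). -/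
/-- In the two-node stochastic computation graph, the score-function recursion
`c⁰ = c`, `c^{n+1} = ∂_θ c^n + c^n (∂_θ log p + ∂_θ log q)` gives unbiased
estimators of all orders: `∑_{x,y} p q c^n = L^{(n)}(θ)`. -/
theorem two_node_recursion_unbiased_all_orders
    {X Y : Type*} [Fintype X] [Fintype Y]
    (p : X → ℝ → ℝ) (q : X → Y → ℝ → ℝ) (c : X → Y → ℝ → ℝ)
    (hp_pos : ∀ x θ, 0 < p x θ)
    (hp_sum : ∀ θ, ∑ x, p x θ = 1)
    (hq_pos : ∀ x y θ, 0 < q x y θ)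
    (hq_sum : ∀ x θ, ∑ y, q x y θ = 1)
    (hp_smooth : ∀ x, ContDiff ℝ (⊤ : ℕ∞) (p x))
    (hq_smooth : ∀ x y, ContDiff ℝ (⊤ : ℕ∞) (q x y))
    (hc_smooth : ∀ x y, ContDiff ℝ (⊤ : ℕ∞) (c x y))
    (s : X → Y → ℝ → ℝ)
    (hs : ∀ x y θ, s x y θ =
      deriv (fun θ => Real.log (p x θ)) θ +
        deriv (fun θ => Real.log (q x y θ)) θ)
    (cn : ℕ → X → Y → ℝ → ℝ)
    (hc0 : ∀ x y θ, cn 0 x y θ = c x y θ)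
    (hcrec : ∀ n x y θ, cn (n + 1) x y θ =
      deriv (cn n x y) θ + cn n x y θ * s x y θ) :
    ∀ (n : ℕ) (θ : ℝ),
      ∑ x, ∑ y, p x θ * q x y θ * cn n x y θ =
        deriv^[n] (fun θ => ∑ x, ∑ y, p x θ * q x y θ * c x y θ) θ := by
  have hp_inf : ∀ x, ContDiff ℝ ((⊤ : ℕ∞) : WithTop ℕ∞) (p x) := fun x => (hp_smooth x).of_le (by simp)
  have hq_inf : ∀ x y, ContDiff ℝ ((⊤ : ℕ∞) : WithTop ℕ∞) (q x y) := fun x y => (hq_smooth x y).of_le (by simp)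
  -- formula for s
  have hs' : ∀ x y θ, s x y θ =
      deriv (p x) θ / p x θ + deriv (q x y) θ / q x y θ := by
    intro x y θ
    rw [hs x y θ,
      (((hp_inf x).differentiable (by simp) θ).hasDerivAt.log
        (hp_pos x θ).ne').deriv,
      (((hq_inf x y).differentiable (by simp) θ).hasDerivAt.log
        (hq_pos x y θ).ne').deriv]
  have hs_smooth : ∀ x y, ContDiff ℝ ((⊤ : ℕ∞) : WithTop ℕ∞) (s x y) := by
    intro x y
    have : s x y = fun θ => deriv (p x) θ / p x θ + deriv (q x y) θ / q x y θ :=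
      funext fun θ => hs' x y θ
    rw [this]
    exact (((hp_inf x).iterate_deriv 1).div (hp_inf x) fun θ => (hp_pos x θ).ne').add
      (((hq_inf x y).iterate_deriv 1).div (hq_inf x y) fun θ => (hq_pos x y θ).ne')
  -- smoothness of cn n
  have hcn_smooth : ∀ n x y, ContDiff ℝ ((⊤ : ℕ∞) : WithTop ℕ∞) (cn n x y) := by
    intro n
    induction n with
    | zero =>
      intro x y
      have : cn 0 x y = c x y := funext fun θ => hc0 x y θ
      rw [this]; exact (hc_smooth x y).of_le (by simp)
    | succ n ih =>
      intro x y
      have : cn (n + 1) x y = fun θ => deriv (cn n x y) θ + cn n x y θ * s x y θ :=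
        funext fun θ => hcrec n x y θ
      rw [this]
      exact ((ih x y).iterate_deriv 1).add ((ih x y).mul (hs_smooth x y))
  -- key pointwise derivative formula
  have key : ∀ n x y θ,
      HasDerivAt (fun θ => p x θ * q x y θ * cn n x y θ)
        (p x θ * q x y θ * cn (n + 1) x y θ) θ := by
    intro n x y θ
    have hP := ((hp_inf x).differentiable (by simp) θ).hasDerivAt
    have hQ := ((hq_inf x y).differentiable (by simp) θ).hasDerivAt
    have hC := ((hcn_smooth n x y).differentiable (by simp) θ).hasDerivAt
    have h := (hP.mul hQ).mul hC
    refine h.congr_deriv ?_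
    rw [hcrec n x y θ, hs' x y θ]
    field_simp [(hp_pos x θ).ne', (hq_pos x y θ).ne']
    rw [Pi.mul_apply]
    ring
  intro n
  induction n with
  | zero => intro θ; simp [hc0]
  | succ n ih =>
    intro θ
    have hfun : (fun θ => ∑ x, ∑ y, p x θ * q x y θ * cn n x y θ)
        = deriv^[n] (fun θ => ∑ x, ∑ y, p x θ * q x y θ * c x y θ) :=
      funext fun θ => ih θ
    have hsum : HasDerivAt (fun θ => ∑ x, ∑ y, p x θ * q x y θ * cn n x y θ)
        (∑ x, ∑ y, p x θ * q x y θ * cn (n + 1) x y θ) θ :=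
      HasDerivAt.fun_sum fun x _ => HasDerivAt.fun_sum fun y _ => key n x y θ
    rw [Function.iterate_succ_apply', ← hfun, hsum.deriv]
end
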